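/- The function $g(\rho^{-1}, \eta, F, Y, \psi) = -p\log(\rho^{-1}) + q\eta - r\log(\psi) + s\,\operatorname{tr}(F Y^{-1/2} F^\top)$ with constants $p,q,r,s>0$ is convex on $(0,\infty)\times\mathbb{R}\times\mathbb{R}^{3\times3}\times\mathcal{S}^3_{>0}\times(0,\infty)$, and hence $C\exp(g)$ is convex for any constant $C>0$. -/

import Mathlib

open Matrix Set Real

open scoped Classical in
/-- The inverse of the unique symmetric positive-semidefinite square root of `Y`
(junk value `0` when `Y` is not positive semidefinite). -/
noncomputable def invSqrt (Y : Matrix (Fin 3) (Fin 3) ℝ) : Matrix (Fin 3) (Fin 3) ℝ :=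
  if h : Y.PosSemidef then
    (h.1.eigenvectorUnitary.1 * diagonal ((↑) ∘ (√·) ∘ h.1.eigenvalues) *
      (star h.1.eigenvectorUnitary : Matrix (Fin 3) (Fin 3) ℝ))⁻¹ else 0

/-
The logarithmic terms are convex because `log` is concave and the `η` term is linear. The trace
term is the matrix fractional function `(S, F) ↦ F S⁻¹ Fᵀ`, jointly convex in the Loewner order
by a Schur complement argument and antitone in `S`, composed with the operator concave map
`Y ↦ Y^{1/2}`; operator concavity of the square root follows from
`√Ȳ² - (a√Y₁ + b√Y₂)² = ab (√Y₁ - √Y₂)² ≥ 0` and monotonicity of the square root.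
Finally `exp ∘ g` is convex since `exp` is convex and increasing.
-/

open scoped MatrixOrder ComplexOrder

namespace Matrix

section RCLike

variable {𝕜 : Type*} [RCLike 𝕜] {m n : Type*}

theorem convex_setOf_posDef : Convex ℝ {A : Matrix n n 𝕜 | A.PosDef} := by
  intro A hA B hB a b ha hb hab
  rcases ha.eq_or_lt with rfl | ha
  · simp_all
  · exact (hA.smul ha).add_posSemidef (hB.posSemidef.smul hb)

theorem convex_setOf_fst_posDef {E : Type*} [AddCommMonoid E] [Module ℝ E] :
    Convex ℝ {P : Matrix n n 𝕜 × E | P.1.PosDef} :=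
  fun _ hx _ hy _ _ ha hb hab => convex_setOf_posDef hx hy ha hb hab

variable [Fintype m] [Fintype n]

theorem trace_mono {A B : Matrix n n 𝕜} (h : A ≤ B) : A.trace ≤ B.trace := by
  simpa [trace_sub] using (le_iff.mp h).trace_nonneg

theorem mul_mul_conjTranspose_mono {A B : Matrix n n 𝕜} (h : A ≤ B) (F : Matrix m n 𝕜) :
    F * A * Fᴴ ≤ F * B * Fᴴ := by
  rw [le_iff, ← Matrix.sub_mul, ← Matrix.mul_sub]
  exact (le_iff.mp h).mul_mul_conjTranspose_same F

theorem _root_.ConvexOn.trace {E : Type*} [AddCommMonoid E] [Module ℝ E] {s : Set E}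
    {f : E → Matrix n n 𝕜} (hf : ConvexOn ℝ s f) : ConvexOn ℝ s fun x => (f x).trace :=
  ⟨hf.1, fun _ hx _ hy _ _ ha hb hab =>
    (trace_mono (hf.2 hx hy ha hb hab)).trans_eq (by simp [trace_add, trace_smul])⟩

variable [DecidableEq n]

theorem PosDef.posDef_sqrt {Y : Matrix n n 𝕜} (hY : Y.PosDef) : (CFC.sqrt Y).PosDef :=
  isStrictlyPositive_iff_posDef.mp (IsStrictlyPositive.sqrt Y hY.isStrictlyPositive)

theorem PosDef.inv_le_inv {A B : Matrix n n 𝕜} (hB : B.PosDef) (h : B ≤ A) : A⁻¹ ≤ B⁻¹ := by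
  have hA : A.PosDef := by simpa using hB.add_posSemidef (le_iff.mp h)
  have := hA.isUnit.invertible
  have := hB.isUnit.invertible
  have := hB.inv.isUnit.invertible
  -- the two Schur complements of `fromBlocks A 1 1 B⁻¹` are `A - B` and `B⁻¹ - A⁻¹`
  have hblock : (fromBlocks A 1 1ᴴ B⁻¹).PosSemidef :=
    (PosDef.fromBlocks₂₂ A 1 hB.inv).mpr (by simpa [inv_inv_of_invertible] using le_iff.mp h)
  simpa [le_iff] using (PosDef.fromBlocks₁₁ 1 B⁻¹ hA).mp hblock

theorem PosDef.fromBlocks_mul_inv_mul_conjTranspose_posSemidef {A : Matrix n n 𝕜}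
    (hA : A.PosDef) (F : Matrix m n 𝕜) : (fromBlocks A Fᴴ F (F * A⁻¹ * Fᴴ)).PosSemidef := by
  have := hA.isUnit.invertible
  simpa using (PosDef.fromBlocks₁₁ Fᴴ (F * A⁻¹ * Fᴴ) hA).mpr (by simpa using PosSemidef.zero)

theorem convexOn_mul_inv_mul_conjTranspose :
    ConvexOn ℝ {P : Matrix n n 𝕜 × Matrix m n 𝕜 | P.1.PosDef} (fun P => P.2 * P.1⁻¹ * P.2ᴴ) := by
  -- `fromBlocks A Fᴴ F X` is positive semidefinite iff `F * A⁻¹ * Fᴴ ≤ X` (Schur complement),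
  -- and the block matrix is linear in `(A, F, X)`
  refine ⟨convex_setOf_fst_posDef, ?_⟩
  rintro ⟨A₁, F₁⟩ (hA₁ : A₁.PosDef) ⟨A₂, F₂⟩ (hA₂ : A₂.PosDef) a b ha hb hab
  have hA : (a • A₁ + b • A₂).PosDef := convex_setOf_posDef hA₁ hA₂ ha hb hab
  have := hA.isUnit.invertible
  have hblock := ((hA₁.fromBlocks_mul_inv_mul_conjTranspose_posSemidef F₁).smul ha).add
    ((hA₂.fromBlocks_mul_inv_mul_conjTranspose_posSemidef F₂).smul hb)
  rw [fromBlocks_smul, fromBlocks_smul, fromBlocks_add] at hblock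
  have := (PosDef.fromBlocks₁₁ (a • F₁ + b • F₂)ᴴ _ hA).mp (by simpa using hblock)
  simpa [le_iff] using this

end RCLike

section Real

variable {m n : Type*} [Fintype m] [Fintype n] [DecidableEq n]

theorem le_of_mul_self_le_mul_self {C D : Matrix n n ℝ} (hC : 0 ≤ C) (hD : 0 ≤ D)
    (h : D * D ≤ C * C) : D ≤ C := by
  rw [nonneg_iff_posSemidef] at hC hD
  rw [le_iff] at h ⊢
  have hM : (C - D).IsHermitian := hC.isHermitian.sub hD.isHermitian
  refine hM.posSemidef_iff_eigenvalues_nonneg.mpr fun i => ?_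
  set μ := hM.eigenvalues i
  by_contra! hμ
  replace hμ : μ < 0 := hμ
  -- test `C * C - D * D = C * (C - D) + (C - D) * D` on an eigenvector of `C - D` for `μ < 0`
  set v : n → ℝ := ⇑(hM.eigenvectorBasis i)
  have hv : v ≠ 0 := fun h0 =>
    hM.eigenvectorBasis.orthonormal.ne_zero i (by ext j; exact congrFun h0 j)
  have hMv : (C - D) *ᵥ v = μ • v := hM.mulVec_eigenvectorBasis i
  have hquad : v ⬝ᵥ ((C * C - D * D) *ᵥ v) = μ * (v ⬝ᵥ (C *ᵥ v) + v ⬝ᵥ (D *ᵥ v)) := by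
    have : C * C - D * D = C * (C - D) + (C - D) * D := by noncomm_ring
    rw [this, add_mulVec, dotProduct_add, ← mulVec_mulVec, ← mulVec_mulVec, hMv, mulVec_smul,
      dotProduct_smul, dotProduct_mulVec v (C - D), ← mulVec_transpose,
      (isHermitian_iff_isSymm.mp hM).eq, hMv, smul_dotProduct, smul_eq_mul, smul_eq_mul, mul_add]
  have hCv := hC.dotProduct_mulVec_nonneg v
  have hDv := hD.dotProduct_mulVec_nonneg v
  have hCDv := h.dotProduct_mulVec_nonneg v
  simp only [star_trivial] at hCv hDv hCDv
  have hCv0 : C *ᵥ v = 0 := (hC.dotProduct_mulVec_zero_iff v).mp (by rw [star_trivial]; nlinarith)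
  have hDv0 : D *ᵥ v = 0 := (hD.dotProduct_mulVec_zero_iff v).mp (by rw [star_trivial]; nlinarith)
  have : μ • v = 0 := by rw [← hMv, sub_mulVec, hCv0, hDv0, sub_zero]
  exact hv ((smul_eq_zero.mp this).resolve_left hμ.ne)

theorem concaveOn_sqrt : ConcaveOn ℝ (Set.Ici (0 : Matrix n n ℝ)) CFC.sqrt := by
  refine ⟨convex_Ici 0, fun Y₁ (hY₁ : 0 ≤ Y₁) Y₂ (hY₂ : 0 ≤ Y₂) a b ha hb hab => ?_⟩
  have hY : 0 ≤ a • Y₁ + b • Y₂ := add_nonneg (smul_nonneg ha hY₁) (smul_nonneg hb hY₂)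
  set S₁ := CFC.sqrt Y₁
  set S₂ := CFC.sqrt Y₂
  refine le_of_mul_self_le_mul_self (CFC.sqrt_nonneg _)
    (add_nonneg (smul_nonneg ha (CFC.sqrt_nonneg Y₁)) (smul_nonneg hb (CFC.sqrt_nonneg Y₂))) ?_
  have hdiff : CFC.sqrt (a • Y₁ + b • Y₂) * CFC.sqrt (a • Y₁ + b • Y₂)
      - (a • S₁ + b • S₂) * (a • S₁ + b • S₂) = (a * b) • ((S₁ - S₂) * (S₁ - S₂)) := by
    rw [CFC.sqrt_mul_sqrt_self _ hY, ← CFC.sqrt_mul_sqrt_self Y₁, ← CFC.sqrt_mul_sqrt_self Y₂]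
    obtain rfl : b = 1 - a := by linarith
    simp only [add_mul, mul_add, smul_mul_assoc, mul_smul_comm, sub_mul, mul_sub]
    module
  rw [← sub_nonneg, hdiff]
  exact smul_nonneg (mul_nonneg ha hb)
    ((CFC.sqrt_nonneg Y₁).isSelfAdjoint.sub (CFC.sqrt_nonneg Y₂).isSelfAdjoint).mul_self_nonneg

theorem convexOn_mul_inv_sqrt_mul_transpose :
    ConvexOn ℝ {P : Matrix n n ℝ × Matrix m n ℝ | P.1.PosDef}
      (fun P => P.2 * (CFC.sqrt P.1)⁻¹ * P.2ᵀ) := by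
  refine ⟨convex_setOf_fst_posDef, ?_⟩
  rintro ⟨Y₁, F₁⟩ (hY₁ : Y₁.PosDef) ⟨Y₂, F₂⟩ (hY₂ : Y₂.PosDef) a b ha hb hab
  simp only [Prod.smul_mk, Prod.mk_add_mk, ← conjTranspose_eq_transpose_of_trivial]
  have hsqrt : a • CFC.sqrt Y₁ + b • CFC.sqrt Y₂ ≤ CFC.sqrt (a • Y₁ + b • Y₂) :=
    concaveOn_sqrt.2 hY₁.posSemidef.nonneg hY₂.posSemidef.nonneg ha hb hab
  calc (a • F₁ + b • F₂) * (CFC.sqrt (a • Y₁ + b • Y₂))⁻¹ * (a • F₁ + b • F₂)ᴴ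
      ≤ (a • F₁ + b • F₂) * (a • CFC.sqrt Y₁ + b • CFC.sqrt Y₂)⁻¹ * (a • F₁ + b • F₂)ᴴ :=
        mul_mul_conjTranspose_mono
          ((convex_setOf_posDef hY₁.posDef_sqrt hY₂.posDef_sqrt ha hb hab).inv_le_inv hsqrt) _
    _ ≤ a • (F₁ * (CFC.sqrt Y₁)⁻¹ * F₁ᴴ) + b • (F₂ * (CFC.sqrt Y₂)⁻¹ * F₂ᴴ) :=
        convexOn_mul_inv_mul_conjTranspose.2 (x := (_, F₁)) (y := (_, F₂)) hY₁.posDef_sqrt hY₂.posDef_sqrt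
          ha hb hab

end Real

end Matrix

theorem invSqrt_eq_inv_sqrt {Y : Matrix (Fin 3) (Fin 3) ℝ} (hY : Y.PosSemidef) :
    invSqrt Y = (CFC.sqrt Y)⁻¹ := by
  rw [invSqrt, dif_pos hY, CFC.sqrt_eq_real_sqrt Y hY.nonneg, cfcₙ_eq_cfc, hY.1.cfc_eq,
    IsHermitian.cfc, Unitary.conjStarAlgAut_apply]
  rfl

theorem convexOn_trace_mul_invSqrt_mul_transpose :
    ConvexOn ℝ {P : Matrix (Fin 3) (Fin 3) ℝ × Matrix (Fin 3) (Fin 3) ℝ | P.1.PosDef}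
      (fun P => (P.2 * invSqrt P.1 * P.2ᵀ).trace) :=
  convexOn_mul_inv_sqrt_mul_transpose.trace.congr fun P hP => by
    simp only [invSqrt_eq_inv_sqrt hP.posSemidef]

theorem ConvexOn.exp {E : Type*} [AddCommMonoid E] [Module ℝ E] {s : Set E} {f : E → ℝ}
    (hf : ConvexOn ℝ s f) : ConvexOn ℝ s fun x => Real.exp (f x) :=
  ⟨hf.1, fun _ hx _ hy _ _ ha hb hab =>
    (exp_le_exp.2 (hf.2 hx hy ha hb hab)).trans (convexOn_exp.2 trivial trivial ha hb hab)⟩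

theorem stmt12_general (p q r s : ℝ) (hp : 0 < p) (hr : 0 < r) (hs : 0 < s) :
    ConvexOn ℝ
      {P : ℝ × ℝ × Matrix (Fin 3) (Fin 3) ℝ × Matrix (Fin 3) (Fin 3) ℝ × ℝ |
        0 < P.1 ∧ P.2.2.2.1.PosDef ∧ 0 < P.2.2.2.2}
      (fun P => -p * Real.log P.1 + q * P.2.1 - r * Real.log P.2.2.2.2
        + s * (P.2.2.1 * invSqrt P.2.2.2.1 * P.2.2.1ᵀ).trace) ∧
    ∀ C : ℝ, 0 < C →
      ConvexOn ℝ
        {P : ℝ × ℝ × Matrix (Fin 3) (Fin 3) ℝ × Matrix (Fin 3) (Fin 3) ℝ × ℝ |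
          0 < P.1 ∧ P.2.2.2.1.PosDef ∧ 0 < P.2.2.2.2}
        (fun P => C * Real.exp (-p * Real.log P.1 + q * P.2.1 - r * Real.log P.2.2.2.2
          + s * (P.2.2.1 * invSqrt P.2.2.2.1 * P.2.2.1ᵀ).trace)) := by
  refine (fun hg => ⟨hg, fun C hC => hg.exp.smul hC.le⟩) ⟨?_, ?_⟩
  · exact fun x hx y hy a b ha hb hab => ⟨convex_Ioi (0 : ℝ) hx.1 hy.1 ha hb hab,
      convex_setOf_posDef hx.2.1 hy.2.1 ha hb hab, convex_Ioi (0 : ℝ) hx.2.2 hy.2.2 ha hb hab⟩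
  · intro x hx y hy a b ha hb hab
    have hlog₁ := strictConcaveOn_log_Ioi.concaveOn.2 hx.1 hy.1 ha hb hab
    have hlog₂ := strictConcaveOn_log_Ioi.concaveOn.2 hx.2.2 hy.2.2 ha hb hab
    have htrace := convexOn_trace_mul_invSqrt_mul_transpose.2
      (x := (x.2.2.2.1, x.2.2.1)) hx.2.1 (y := (y.2.2.2.1, y.2.2.1)) hy.2.1 ha hb hab
    simp only [smul_eq_mul, Prod.smul_mk, Prod.mk_add_mk, Prod.fst_add, Prod.snd_add,
      Prod.smul_fst, Prod.smul_snd] at hlog₁ hlog₂ htrace ⊢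
    linear_combination p * hlog₁ + r * hlog₂ + s * htrace

/-- For constants `p, q, r, s > 0`, the function
`g(v, η, F, Y, ψ) = -p log v + q η - r log ψ + s tr(F Y^{-1/2} Fᵀ)`
(here `v = ρ⁻¹`) is convex on `(0,∞) × ℝ × ℝ^{3×3} × 𝒮³₊ × (0,∞)`,
and hence `C exp(g)` is convex there for any constant `C > 0`. -/
theorem stmt12 (p q r s : ℝ) (hp : 0 < p) (hq : 0 < q) (hr : 0 < r) (hs : 0 < s) :
    ConvexOn ℝ
      {P : ℝ × ℝ × Matrix (Fin 3) (Fin 3) ℝ × Matrix (Fin 3) (Fin 3) ℝ × ℝ |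
        0 < P.1 ∧ P.2.2.2.1.PosDef ∧ 0 < P.2.2.2.2}
      (fun P => -p * Real.log P.1 + q * P.2.1 - r * Real.log P.2.2.2.2
        + s * (P.2.2.1 * invSqrt P.2.2.2.1 * P.2.2.1ᵀ).trace) ∧
    ∀ C : ℝ, 0 < C →
      ConvexOn ℝ
        {P : ℝ × ℝ × Matrix (Fin 3) (Fin 3) ℝ × Matrix (Fin 3) (Fin 3) ℝ × ℝ |
          0 < P.1 ∧ P.2.2.2.1.PosDef ∧ 0 < P.2.2.2.2}
        (fun P => C * Real.exp (-p * Real.log P.1 + q * P.2.1 - r * Real.log P.2.2.2.2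
          + s * (P.2.2.1 * invSqrt P.2.2.2.1 * P.2.2.1ᵀ).trace)) :=
  stmt12_general p q r s hp hr hs
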